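/- Assume the Maass-type hypothesis for (A_m)_{m∈ℤ∖{0}}, and set L₊(s) = Σ_{m>0} A_m m^{−s} and L₋(s) = −Σ_{m>0} A_{−m} m^{−s}, so that L₊ = (L₀ + L₁)/2 and L₋ = (L₁ − L₀)/2. Then for every integer n ≥ 0 with n + 1 > α, the continued values satisfy L₊(−n) = (2^{−2n−1}/π^{2n+2})·(n!)²·Σ_{m∈ℤ∖{0}} A_m/(−m)^{n+1} and L₋(−n) = −(2^{−2n−1}/π^{2n+2})·(n!)²·Σ_{m∈ℤ∖{0}} A_m/m^{n+1}, the series over m converging absolutely. -/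
import Mathlib


noncomputable section

open Complex Filter Topology

/-- The gamma factor `γ(s) = Γ(s/2)² / (4 π^s)`. -/
def gammaFactor (s : ℂ) : ℂ := Complex.Gamma (s / 2) ^ 2 / (4 * (Real.pi : ℂ) ^ s)

/-- The coefficients `A_m + (-1)^ε A_{-m}` of the L-series `L_ε`. -/
def maassCoef (A : ℤ → ℂ) (ε : ℕ) (m : ℕ) : ℂ :=
  A ((m : ℤ) + 1) + (-1) ^ ε * A (-((m : ℤ) + 1))

lemma stmt7_cpow_pi_ne_zero (s : ℂ) : (Real.pi : ℂ) ^ s ≠ 0 := by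
  rw [Complex.cpow_def_of_ne_zero (by exact_mod_cast Real.pi_ne_zero)]
  exact Complex.exp_ne_zero _

lemma stmt7_sin_sq_odd (j : ℤ) (z : ℂ) (hz : 2 * z = 2 * j + 1) :
    Complex.sin ((Real.pi : ℂ) * z) ^ 2 = 1 := by
  have hc : Complex.cos (2 * ((Real.pi : ℂ) * z)) = -1 := by
    have h2 : 2 * ((Real.pi : ℂ) * z) = (j : ℂ) * (2 * (Real.pi : ℂ)) + (Real.pi : ℂ) := by
      linear_combination (Real.pi : ℂ) * hz
    rw [h2, Complex.cos_int_mul_two_pi_add_pi]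
  have hcos := Complex.cos_two_mul ((Real.pi : ℂ) * z)
  have hpyth := Complex.sin_sq_add_cos_sq ((Real.pi : ℂ) * z)
  rw [hc] at hcos
  linear_combination hpyth + hcos / 2

lemma stmt7_Gamma_sq_reflect (z : ℂ) (j : ℤ) (hz : 2 * z = 2 * j + 1) :
    Complex.Gamma z ^ 2 * Complex.Gamma (1 - z) ^ 2 = (Real.pi : ℂ) ^ 2 := by
  have h : (Complex.Gamma z * Complex.Gamma (1 - z)) ^ 2
      = ((Real.pi : ℂ) / Complex.sin ((Real.pi : ℂ) * z)) ^ 2 := by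
    rw [Complex.Gamma_mul_Gamma_one_sub]
  rw [mul_pow, div_pow, stmt7_sin_sq_odd j z hz, div_one] at h
  exact h

lemma stmt7_gamma_dup (n : ℕ) :
    Complex.Gamma (((n : ℂ) + 1) / 2) * Complex.Gamma (((n : ℂ) + 2) / 2)
      = (n.factorial : ℂ) * ((2 : ℂ) ^ n)⁻¹ * (Real.sqrt Real.pi : ℂ) := by
  have h := Complex.Gamma_mul_Gamma_add_half (((n : ℂ) + 1) / 2)
  rw [show ((n : ℂ) + 1) / 2 + 1 / 2 = ((n : ℂ) + 2) / 2 by ring] at h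
  rw [show 2 * (((n : ℂ) + 1) / 2) = (n : ℂ) + 1 by ring] at h
  rw [h, Complex.Gamma_nat_eq_factorial,
    show (1 : ℂ) - ((n : ℂ) + 1) = -((n : ℕ) : ℂ) by ring,
    Complex.cpow_neg, Complex.cpow_natCast]

lemma stmt7_gf_even_zero {n : ℕ} (k : ℕ) (hk : n = 2 * k) : gammaFactor (-(n : ℂ)) = 0 := by
  have h : (-(n : ℂ)) / 2 = -(k : ℂ) := by subst hk; push_cast; ring
  rw [gammaFactor, h, Complex.Gamma_neg_nat_eq_zero]
  simp

lemma stmt7_gf_odd_zero {n : ℕ} (k : ℕ) (hk : n = 2 * k + 1) :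
    gammaFactor (-(n : ℂ) + 1) = 0 := by
  have h : (-(n : ℂ) + 1) / 2 = -(k : ℂ) := by subst hk; push_cast; ring
  rw [gammaFactor, h, Complex.Gamma_neg_nat_eq_zero]
  simp

lemma stmt7_gf_ratio_even {n : ℕ} (k : ℕ) (hk : n = 2 * k) :
    gammaFactor (-(n : ℂ) + 1) ≠ 0 ∧
    gammaFactor ((n : ℂ) + 1 + 1)
      = 2 * (((2 : ℂ) ^ (2 * n + 1))⁻¹ / (Real.pi : ℂ) ^ (2 * n + 2) * (n.factorial : ℂ) ^ 2)
        * gammaFactor (-(n : ℂ) + 1) := by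
  have hπ : (Real.pi : ℂ) ≠ 0 := by exact_mod_cast Real.pi_ne_zero
  have hπ2 : (Real.pi : ℂ) ^ 2 ≠ 0 := pow_ne_zero _ hπ
  have hG1 : Complex.Gamma (((n : ℂ) + 1) / 2) ≠ 0 := by
    apply Complex.Gamma_ne_zero_of_re_pos
    rw [show ((n : ℂ) + 1) / 2 = ((((n : ℝ) + 1) / 2 : ℝ) : ℂ) by push_cast; ring,
      Complex.ofReal_re]
    positivity
  have hrefl := stmt7_Gamma_sq_reflect ((-(n : ℂ) + 1) / 2) (-(k : ℤ))
    (by subst hk; push_cast; ring)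
  rw [show (1 : ℂ) - (-(n : ℂ) + 1) / 2 = ((n : ℂ) + 1) / 2 by ring] at hrefl
  have hGz : Complex.Gamma ((-(n : ℂ) + 1) / 2) ≠ 0 := by
    intro h0
    apply hπ2
    rw [← hrefl, h0]
    ring
  constructor
  · rw [gammaFactor]
    exact div_ne_zero (pow_ne_zero _ hGz)
      (mul_ne_zero (by norm_num) (stmt7_cpow_pi_ne_zero _))
  · have hp1 : (Real.pi : ℂ) ^ ((n : ℂ) + 1 + 1) = (Real.pi : ℂ) ^ (n + 2 : ℕ) := by
      rw [show ((n : ℂ) + 1 + 1) = ((n + 2 : ℕ) : ℂ) by push_cast; ring, Complex.cpow_natCast]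
    have hp2 : (Real.pi : ℂ) ^ (-(n : ℂ) + 1) = (Real.pi : ℂ) * ((Real.pi : ℂ) ^ n)⁻¹ := by
      rw [show (-(n : ℂ) + 1) = 1 + -(n : ℂ) by ring, Complex.cpow_add _ _ hπ,
        Complex.cpow_one, Complex.cpow_neg, Complex.cpow_natCast]
    have hsq : ((Real.sqrt Real.pi : ℝ) : ℂ) ^ 2 = (Real.pi : ℂ) := by
      rw [← Complex.ofReal_pow, Real.sq_sqrt Real.pi_pos.le]
    have hG2eq : Complex.Gamma (((n : ℂ) + 2) / 2)
        = (n.factorial : ℂ) * ((2 : ℂ) ^ n)⁻¹ * (Real.sqrt Real.pi : ℂ)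
          / Complex.Gamma (((n : ℂ) + 1) / 2) := by
      rw [eq_div_iff hG1]
      linear_combination stmt7_gamma_dup n
    have hGzeq : Complex.Gamma ((-(n : ℂ) + 1) / 2) ^ 2
        = (Real.pi : ℂ) ^ 2 / Complex.Gamma (((n : ℂ) + 1) / 2) ^ 2 := by
      rw [eq_div_iff (pow_ne_zero 2 hG1)]
      linear_combination hrefl
    rw [gammaFactor, gammaFactor, show ((n : ℂ) + 1 + 1) / 2 = ((n : ℂ) + 2) / 2 by ring,
      hp1, hp2, hG2eq, hGzeq, div_pow, mul_pow, mul_pow, hsq]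
    field_simp
    ring

lemma stmt7_gf_ratio_odd {n : ℕ} (k : ℕ) (hk : n = 2 * k + 1) :
    gammaFactor (-(n : ℂ)) ≠ 0 ∧
    gammaFactor ((n : ℂ) + 1)
      = 2 * (((2 : ℂ) ^ (2 * n + 1))⁻¹ / (Real.pi : ℂ) ^ (2 * n + 2) * (n.factorial : ℂ) ^ 2)
        * gammaFactor (-(n : ℂ)) := by
  have hπ : (Real.pi : ℂ) ≠ 0 := by exact_mod_cast Real.pi_ne_zero
  have hπ2 : (Real.pi : ℂ) ^ 2 ≠ 0 := pow_ne_zero _ hπ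
  have hG2 : Complex.Gamma (((n : ℂ) + 2) / 2) ≠ 0 := by
    apply Complex.Gamma_ne_zero_of_re_pos
    rw [show ((n : ℂ) + 2) / 2 = ((((n : ℝ) + 2) / 2 : ℝ) : ℂ) by push_cast; ring,
      Complex.ofReal_re]
    positivity
  have hrefl := stmt7_Gamma_sq_reflect (-(n : ℂ) / 2) (-(k : ℤ) - 1)
    (by subst hk; push_cast; ring)
  rw [show (1 : ℂ) - -(n : ℂ) / 2 = ((n : ℂ) + 2) / 2 by ring] at hrefl
  have hGz : Complex.Gamma (-(n : ℂ) / 2) ≠ 0 := by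
    intro h0
    apply hπ2
    rw [← hrefl, h0]
    ring
  constructor
  · rw [gammaFactor]
    exact div_ne_zero (pow_ne_zero _ hGz)
      (mul_ne_zero (by norm_num) (stmt7_cpow_pi_ne_zero _))
  · have hp1 : (Real.pi : ℂ) ^ ((n : ℂ) + 1) = (Real.pi : ℂ) ^ (n + 1 : ℕ) := by
      rw [show ((n : ℂ) + 1) = ((n + 1 : ℕ) : ℂ) by push_cast; ring, Complex.cpow_natCast]
    have hp2 : (Real.pi : ℂ) ^ (-(n : ℂ)) = ((Real.pi : ℂ) ^ n)⁻¹ := by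
      rw [Complex.cpow_neg, Complex.cpow_natCast]
    have hsq : ((Real.sqrt Real.pi : ℝ) : ℂ) ^ 2 = (Real.pi : ℂ) := by
      rw [← Complex.ofReal_pow, Real.sq_sqrt Real.pi_pos.le]
    have hG1eq : Complex.Gamma (((n : ℂ) + 1) / 2)
        = (n.factorial : ℂ) * ((2 : ℂ) ^ n)⁻¹ * (Real.sqrt Real.pi : ℂ)
          / Complex.Gamma (((n : ℂ) + 2) / 2) := by
      rw [eq_div_iff hG2]
      linear_combination stmt7_gamma_dup n
    have hGzeq : Complex.Gamma (-(n : ℂ) / 2) ^ 2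
        = (Real.pi : ℂ) ^ 2 / Complex.Gamma (((n : ℂ) + 2) / 2) ^ 2 := by
      rw [eq_div_iff (pow_ne_zero 2 hG2)]
      linear_combination hrefl
    rw [gammaFactor, gammaFactor, hp1, hp2, hG1eq, hGzeq, div_pow, mul_pow, mul_pow, hsq]
    field_simp
    ring

lemma stmt7_summable_half {f g : ℕ → ℂ} (hfg : Summable fun m => ‖f m + g m‖)
    (hfg' : Summable fun m => ‖f m - g m‖) :
    (Summable fun m => ‖f m‖) ∧ Summable fun m => ‖g m‖ := by
  have h2 : ‖(2 : ℂ)‖ = 2 := by norm_num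
  constructor
  · refine Summable.of_nonneg_of_le (fun _ => norm_nonneg _) (fun m => ?_) (hfg.add hfg')
    have e2 : ‖f m‖ * 2 = ‖(f m + g m) + (f m - g m)‖ := by
      rw [← h2, ← norm_mul]; congr 1; ring
    have h1 := norm_add_le (f m + g m) (f m - g m)
    have h3 := norm_nonneg (f m + g m)
    have h4 := norm_nonneg (f m - g m)
    linarith
  · refine Summable.of_nonneg_of_le (fun _ => norm_nonneg _) (fun m => ?_) (hfg.add hfg')
    have e2 : ‖g m‖ * 2 = ‖(f m + g m) - (f m - g m)‖ := by
      rw [← h2, ← norm_mul]; congr 1; ring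
    have h1 := norm_sub_le (f m + g m) (f m - g m)
    have h3 := norm_nonneg (f m + g m)
    have h4 := norm_nonneg (f m - g m)
    linarith

lemma stmt7_int_tsum_split (F : ℤ → ℂ) (hF0 : F 0 = 0)
    (h₁ : Summable fun m : ℕ => ‖F ((m : ℤ) + 1)‖)
    (h₂ : Summable fun m : ℕ => ‖F (-((m : ℤ) + 1))‖) :
    (Summable fun m : ℤ => ‖F m‖) ∧
    (∑' m : {m : ℤ // m ≠ 0}, F m.1
      = (∑' m : ℕ, F ((m : ℤ) + 1)) + ∑' m : ℕ, F (-((m : ℤ) + 1))) := by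
  have hs : Summable fun m : ℤ => ‖F m‖ := by
    apply Summable.of_nat_of_neg
    · apply (summable_nat_add_iff 1).mp
      exact h₁.congr fun m => by push_cast; ring_nf
    · apply (summable_nat_add_iff 1).mp
      exact h₂.congr fun m => by push_cast; ring_nf
  refine ⟨hs, ?_⟩
  have hsub : ∑' m : {m : ℤ // m ≠ 0}, F m.1 = ∑' m : ℤ, F m :=
    tsum_subtype_eq_of_support_subset (s := {m : ℤ | m ≠ 0})
      (fun m hm h0 => hm (h0 ▸ hF0))
  rw [hsub, tsum_of_add_one_of_neg_add_one h₁.of_norm h₂.of_norm, hF0]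
  ring

/-- Under the Maass-type hypothesis, with `L₊ = (L₀+L₁)/2` and
`L₋ = (L₁-L₀)/2` continued via `L_ε(s) = Λ_ε(s)/γ(s+ε)`, for `n + 1 > α` one has
`L₊(-n) = (2^{-2n-1}/π^{2n+2})(n!)² Σ_{m≠0} A_m/(-m)^{n+1}` and
`L₋(-n) = -(2^{-2n-1}/π^{2n+2})(n!)² Σ_{m≠0} A_m/m^{n+1}`, the sums over `m` converging
absolutely. -/
theorem stmt7 (A : ℤ → ℂ) (α : ℝ) (hα : 0 ≤ α)
    (Λ : ℕ → ℂ → ℂ)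
    (hsum : ∀ ε ∈ ({0, 1} : Set ℕ), ∀ s : ℂ, α < s.re →
      Summable fun m : ℕ => ‖maassCoef A ε m / ((m : ℂ) + 1) ^ s‖)
    (hent : ∀ ε ∈ ({0, 1} : Set ℕ), Differentiable ℂ (Λ ε))
    (hord : ∀ ε ∈ ({0, 1} : Set ℕ), ∃ c ρ : ℝ, 0 < c ∧ 0 < ρ ∧
      ∀ s : ℂ, ‖Λ ε s‖ ≤ c * Real.exp (‖s‖ ^ ρ))
    (hagree : ∀ ε ∈ ({0, 1} : Set ℕ), ∀ s : ℂ, α < s.re →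
      Λ ε s = gammaFactor (s + (ε : ℂ)) * ∑' m : ℕ, maassCoef A ε m / ((m : ℂ) + 1) ^ s)
    (hfe : ∀ ε ∈ ({0, 1} : Set ℕ), ∀ s : ℂ, Λ ε (1 - s) = (-1) ^ ε * Λ ε s) :
    ∀ n : ℕ, α < (n : ℝ) + 1 →
      -- absolute convergence of the bilateral sum Σ_{m≠0} A_m/m^{n+1}
      (Summable fun m : {m : ℤ // m ≠ 0} => ‖A m.1 / ((m.1 : ℂ)) ^ (n + 1)‖) ∧
      -- the continued value L₊(-n)
      (Λ 0 (-(n : ℂ)) / gammaFactor (-(n : ℂ))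
            + Λ 1 (-(n : ℂ)) / gammaFactor (-(n : ℂ) + 1)) / 2
        = ((2 : ℂ) ^ (2 * n + 1))⁻¹ / (Real.pi : ℂ) ^ (2 * n + 2) * (n.factorial : ℂ) ^ 2
            * ∑' m : {m : ℤ // m ≠ 0}, A m.1 / (-(m.1 : ℂ)) ^ (n + 1) ∧
      -- the continued value L₋(-n)
      (Λ 1 (-(n : ℂ)) / gammaFactor (-(n : ℂ) + 1)
            - Λ 0 (-(n : ℂ)) / gammaFactor (-(n : ℂ))) / 2
        = -(((2 : ℂ) ^ (2 * n + 1))⁻¹ / (Real.pi : ℂ) ^ (2 * n + 2) * (n.factorial : ℂ) ^ 2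
            * ∑' m : {m : ℤ // m ≠ 0}, A m.1 / ((m.1 : ℂ)) ^ (n + 1)) := by
  intro n hn
  have h0mem : (0 : ℕ) ∈ ({0, 1} : Set ℕ) := by simp
  have h1mem : (1 : ℕ) ∈ ({0, 1} : Set ℕ) := by simp
  have hre : α < ((n : ℂ) + 1).re := by simpa using hn
  have hπ : (Real.pi : ℂ) ≠ 0 := by exact_mod_cast Real.pi_ne_zero
  have hcpow : ∀ m : ℕ, ((m : ℂ) + 1) ^ ((n : ℂ) + 1) = ((m : ℂ) + 1) ^ (n + 1) := fun m => by
    rw [show ((n : ℂ) + 1) = ((n + 1 : ℕ) : ℂ) by push_cast; ring, Complex.cpow_natCast]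
  have h0 := hsum 0 h0mem ((n : ℂ) + 1) hre
  have h1 := hsum 1 h1mem ((n : ℂ) + 1) hre
  have h0' : Summable fun m : ℕ =>
      ‖A ((m : ℤ) + 1) / ((m : ℂ) + 1) ^ (n + 1)
        + A (-((m : ℤ) + 1)) / ((m : ℂ) + 1) ^ (n + 1)‖ :=
    h0.congr fun m => by
      congr 1
      rw [maassCoef, hcpow m]
      simp only [pow_zero, one_mul]
      ring
  have h1' : Summable fun m : ℕ =>
      ‖A ((m : ℤ) + 1) / ((m : ℂ) + 1) ^ (n + 1)
        - A (-((m : ℤ) + 1)) / ((m : ℂ) + 1) ^ (n + 1)‖ :=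
    h1.congr fun m => by
      congr 1
      rw [maassCoef, hcpow m]
      simp only [pow_one]
      ring
  obtain ⟨hgpn, hgmn⟩ := stmt7_summable_half h0' h1'
  have hgp := hgpn.of_norm
  have hgm := hgmn.of_norm
  -- splitting for F m = A m / m^(n+1)
  obtain ⟨hFsum, hFval⟩ := stmt7_int_tsum_split (fun m : ℤ => A m / (m : ℂ) ^ (n + 1))
    (by simp)
    (hgpn.congr fun m => by push_cast; ring_nf)
    (hgmn.congr fun m => by push_cast; simp only [norm_div, norm_pow, norm_neg])
  -- splitting for Fm m = A m / (-m)^(n+1)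
  obtain ⟨hFmsum, hFmval⟩ := stmt7_int_tsum_split (fun m : ℤ => A m / (-(m : ℂ)) ^ (n + 1))
    (by simp)
    (hgpn.congr fun m => by push_cast; simp only [norm_div, norm_pow, norm_neg])
    (hgmn.congr fun m => by push_cast; simp only [norm_div, norm_pow, norm_neg, neg_neg])
  have hinv : ((-1 : ℂ) ^ (n + 1))⁻¹ = (-1 : ℂ) ^ (n + 1) := by
    refine inv_eq_of_mul_eq_one_right ?_
    rw [← mul_pow]
    norm_num
  have hptneg : ∀ a x : ℂ, a / (-x) ^ (n + 1) = (-1 : ℂ) ^ (n + 1) * (a / x ^ (n + 1)) :=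
    fun a x => by
      rw [neg_pow, div_eq_mul_inv, mul_inv, hinv, div_eq_mul_inv]
      ring
  -- the two bilateral sums
  have hB : (∑' m : {m : ℤ // m ≠ 0}, A m.1 / ((m.1 : ℂ)) ^ (n + 1))
      = (∑' m : ℕ, A ((m : ℤ) + 1) / ((m : ℂ) + 1) ^ (n + 1))
        + (-1 : ℂ) ^ (n + 1) * ∑' m : ℕ, A (-((m : ℤ) + 1)) / ((m : ℂ) + 1) ^ (n + 1) := by
    rw [hFval]
    congr 1
    · exact tsum_congr fun m => by push_cast; ring_nf
    · rw [← tsum_mul_left]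
      exact tsum_congr fun m => by push_cast; rw [hptneg]
  have hBneg : (∑' m : {m : ℤ // m ≠ 0}, A m.1 / (-(m.1 : ℂ)) ^ (n + 1))
      = (-1 : ℂ) ^ (n + 1) * (∑' m : ℕ, A ((m : ℤ) + 1) / ((m : ℂ) + 1) ^ (n + 1))
        + ∑' m : ℕ, A (-((m : ℤ) + 1)) / ((m : ℂ) + 1) ^ (n + 1) := by
    rw [hFmval]
    congr 1
    · rw [← tsum_mul_left]
      exact tsum_congr fun m => by push_cast; rw [hptneg]
    · exact tsum_congr fun m => by push_cast; rw [neg_neg]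
  -- values of Λ at -n
  have hT0 : (∑' m : ℕ, maassCoef A 0 m / ((m : ℂ) + 1) ^ ((n : ℂ) + 1))
      = (∑' m : ℕ, A ((m : ℤ) + 1) / ((m : ℂ) + 1) ^ (n + 1))
        + ∑' m : ℕ, A (-((m : ℤ) + 1)) / ((m : ℂ) + 1) ^ (n + 1) := by
    rw [← Summable.tsum_add hgp hgm]
    exact tsum_congr fun m => by
      rw [maassCoef, hcpow m]
      simp only [pow_zero, one_mul]
      ring
  have hT1 : (∑' m : ℕ, maassCoef A 1 m / ((m : ℂ) + 1) ^ ((n : ℂ) + 1))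
      = (∑' m : ℕ, A ((m : ℤ) + 1) / ((m : ℂ) + 1) ^ (n + 1))
        - ∑' m : ℕ, A (-((m : ℤ) + 1)) / ((m : ℂ) + 1) ^ (n + 1) := by
    rw [← Summable.tsum_sub hgp hgm]
    exact tsum_congr fun m => by
      rw [maassCoef, hcpow m]
      simp only [pow_one]
      ring
  have hΛ0 : Λ 0 (-(n : ℂ))
      = gammaFactor ((n : ℂ) + 1)
        * ((∑' m : ℕ, A ((m : ℤ) + 1) / ((m : ℂ) + 1) ^ (n + 1))
          + ∑' m : ℕ, A (-((m : ℤ) + 1)) / ((m : ℂ) + 1) ^ (n + 1)) := by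
    have h := hfe 0 h0mem ((n : ℂ) + 1)
    rw [show (1 : ℂ) - ((n : ℂ) + 1) = -(n : ℂ) by ring] at h
    rw [h, hagree 0 h0mem _ hre, hT0]
    norm_num
  have hΛ1 : Λ 1 (-(n : ℂ))
      = -(gammaFactor ((n : ℂ) + 1 + 1)
        * ((∑' m : ℕ, A ((m : ℤ) + 1) / ((m : ℂ) + 1) ^ (n + 1))
          - ∑' m : ℕ, A (-((m : ℤ) + 1)) / ((m : ℂ) + 1) ^ (n + 1))) := by
    have h := hfe 1 h1mem ((n : ℂ) + 1)
    rw [show (1 : ℂ) - ((n : ℂ) + 1) = -(n : ℂ) by ring] at h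
    rw [h, hagree 1 h1mem _ hre, hT1]
    norm_num
  rcases Nat.even_or_odd n with he | ho
  · obtain ⟨k, hk⟩ := he
    have hk' : n = 2 * k := by omega
    have hzero := stmt7_gf_even_zero k hk'
    obtain ⟨hne, hratio⟩ := stmt7_gf_ratio_even k hk'
    have hpow : (-1 : ℂ) ^ (n + 1) = -1 := Odd.neg_one_pow ⟨k, by omega⟩
    have hdiv : ∀ c x : ℂ, 2 * c * gammaFactor (-(n : ℂ) + 1) * x
        / gammaFactor (-(n : ℂ) + 1) = 2 * (c * x) := fun c x => by
      rw [div_eq_iff hne]; ring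
    refine ⟨hFsum.comp_injective Subtype.val_injective, ?_, ?_⟩
    · rw [hΛ0, hΛ1, hzero, div_zero, hratio, hBneg, hpow, neg_div, hdiv]
      ring
    · rw [hΛ0, hΛ1, hzero, div_zero, hratio, hB, hpow, neg_div, hdiv]
      ring
  · obtain ⟨k, hk⟩ := ho
    have hzero := stmt7_gf_odd_zero k hk
    obtain ⟨hne, hratio⟩ := stmt7_gf_ratio_odd k hk
    have hpow : (-1 : ℂ) ^ (n + 1) = 1 := Even.neg_one_pow ⟨k + 1, by omega⟩
    have hdiv : ∀ c x : ℂ, 2 * c * gammaFactor (-(n : ℂ)) * x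
        / gammaFactor (-(n : ℂ)) = 2 * (c * x) := fun c x => by
      rw [div_eq_iff hne]; ring
    refine ⟨hFsum.comp_injective Subtype.val_injective, ?_, ?_⟩
    · rw [hΛ0, hΛ1, hzero, div_zero, hratio, hBneg, hpow, hdiv]
      ring
    · rw [hΛ0, hΛ1, hzero, div_zero, hratio, hB, hpow, hdiv]
      ring
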